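/- Let n ≥ 5 be an integer and let A† be the n×n tridiagonal matrix associated with a := 2 and b := i (where i = √−1). Then det(A†) = (2 + 2i)·P_n, where P_n is the n-th Pell number. -/

import Mathlib

/-- The `n × n` complex tridiagonal matrix `A†` (1-based indices): `A†_{1,1} = A†_{n,n} = a + b`,
`A†_{j,j} = a` for `2 ≤ j ≤ n-1`, `A†_{1,2} = A†_{2,1} = b`, `A†_{n-1,n} = A†_{n,n-1} = b`,
`A†_{j,j+1} = A†_{j+1,j} = -b` for `2 ≤ j ≤ n-2`, all other entries `0`. -/
def matAdag (n : ℕ) (a b : ℂ) : Matrix (Fin n) (Fin n) ℂ :=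
  Matrix.of fun i j =>
    let i' := (i : ℕ) + 1
    let j' := (j : ℕ) + 1
    if i' = j' then (if i' = 1 ∨ i' = n then a + b else a)
    else if (i' = 1 ∧ j' = 2) ∨ (i' = 2 ∧ j' = 1) ∨ (i' = n - 1 ∧ j' = n) ∨ (i' = n ∧ j' = n - 1) then b
    else if (i' + 1 = j' ∨ j' + 1 = i') ∧ 2 ≤ min i' j' ∧ min i' j' ≤ n - 2 then -b
    else 0

/-- Pell numbers: `P 0 = 0`, `P 1 = 1`, `P (k+2) = 2 * P (k+1) + P k`. -/
def pell : ℕ → ℕ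
  | 0 => 0
  | 1 => 1
  | (k + 2) => 2 * pell (k + 1) + pell k

/-!
`A†` is tridiagonal, and each product of two opposite off-diagonal entries is `b ^ 2 = -1`.
Expanding along the last row, its leading principal minors therefore obey
`D (k + 2) = d (k + 1) * D (k + 1) + D k`; as the interior diagonal entries are `2`, this is
the Pell recurrence, whence `D k = (2 + i) P k + P (k - 1)` for `1 ≤ k < n`. The last corner entry
`2 + i` then gives `det A† = (2 + i) D (n - 1) + D (n - 2) = (2 + 2i) P n`.
-/

section Tridiagonal

variable {R : Type*} [CommRing R]

def tridiag (d u l : ℕ → R) (n : ℕ) : Matrix (Fin n) (Fin n) R :=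
  Matrix.of fun i j =>
    if (i : ℕ) = j then d i
    else if (j : ℕ) = i + 1 then u i
    else if (i : ℕ) = j + 1 then l j
    else 0

theorem tridiag_submatrix_castSucc (d u l : ℕ → R) (n : ℕ) :
    (tridiag d u l (n + 1)).submatrix Fin.castSucc Fin.castSucc = tridiag d u l n := by
  ext i j
  simp [tridiag]

theorem det_tridiag_succ_succ (d u l : ℕ → R) (n : ℕ) :
    (tridiag d u l (n + 2)).det =
      d (n + 1) * (tridiag d u l (n + 1)).det - u n * l n * (tridiag d u l n).det := by
  set M := tridiag d u l (n + 2)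
  have hrow : ∀ k : Fin n, M (Fin.last _) k.castSucc.castSucc = 0 := by
    intro k
    simp [M, tridiag, k.isLt.ne', (Nat.lt_succ_of_lt k.isLt).ne']
    omega
  have hcol : ∀ k : Fin n, M k.castSucc.castSucc (Fin.last _) = 0 := by
    intro k
    simp [M, tridiag, (Nat.lt_succ_of_lt k.isLt).ne, k.isLt.ne']
    omega
  have hleading : M.submatrix Fin.castSucc Fin.castSucc = tridiag d u l (n + 1) :=
    tridiag_submatrix_castSucc d u l (n + 1)
  have hdiag : M (Fin.last _) (Fin.last _) = d (n + 1) := by simp [M, tridiag]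
  have hsubdiag : M (Fin.last _) (Fin.last n).castSucc = l n := by simp [M, tridiag]; omega
  have hminor : (M.submatrix Fin.castSucc (Fin.last n).castSucc.succAbove).det =
      u n * (tridiag d u l n).det := by
    have hsub : M.submatrix (Fin.castSucc ∘ Fin.castSucc)
        ((Fin.last n).castSucc.succAbove ∘ Fin.castSucc) = tridiag d u l n := by
      ext i j
      simp [M, tridiag, Fin.succAbove_of_castSucc_lt _ _ (Fin.castSucc_lt_last j)]
    rw [Matrix.det_succ_column _ (Fin.last n), Fin.sum_univ_castSucc]
    simp only [Matrix.submatrix_apply, Fin.succAbove_castSucc_self, Fin.succ_last, hcol,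
      Fin.succAbove_last, Matrix.submatrix_submatrix, hsub]
    simp [M, tridiag]
  rw [Matrix.det_succ_row _ (Fin.last _), Fin.sum_univ_castSucc, Fin.sum_univ_castSucc]
  simp only [hrow, Fin.succAbove_last, hminor, hleading, hdiag, hsubdiag,
    mul_zero, zero_mul, Finset.sum_const_zero, zero_add, Fin.val_last, Fin.val_castSucc,
    (Odd.neg_one_pow ⟨n, by ring⟩ : (-1 : R) ^ (n + 1 + n) = -1),
    (Even.neg_one_pow ⟨n + 1, rfl⟩ : (-1 : R) ^ (n + 1 + (n + 1)) = 1)]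
  ring

theorem det_tridiag_eq_pell (d u l : ℕ → R) (N : ℕ) (hd : ∀ j, 0 < j → j < N → d j = 2)
    (hul : ∀ j, u j * l j = -1) :
    ∀ k, k < N → (tridiag d u l (k + 1)).det = d 0 * pell (k + 1) + pell k := by
  refine Nat.twoStepInduction ?_ ?_ fun k ih₀ ih₁ hk => ?_
  · intro _
    simp [tridiag, pell]
  · intro h
    rw [det_tridiag_succ_succ, hd 1 one_pos h, hul]
    simp [tridiag, pell]
    ring
  · rw [det_tridiag_succ_succ, hd (k + 2) (by omega) hk, hul, ih₁ (by omega), ih₀ (by omega)]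
    simp only [pell, Nat.cast_add, Nat.cast_mul, Nat.cast_ofNat]
    ring

end Tridiagonal

def matAdagDiag (n : ℕ) (a b : ℂ) (j : ℕ) : ℂ := if j = 0 ∨ j = n - 1 then a + b else a

def matAdagOffDiag (n : ℕ) (b : ℂ) (j : ℕ) : ℂ := if j = 0 ∨ j = n - 2 then b else -b

theorem matAdag_eq_tridiag (n : ℕ) (a b : ℂ) :
    matAdag n a b = tridiag (matAdagDiag n a b) (matAdagOffDiag n b) (matAdagOffDiag n b) n := by
  ext i j
  have hi := i.isLt
  have hj := j.isLt
  simp only [matAdag, tridiag, matAdagDiag, matAdagOffDiag, Matrix.of_apply]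
  split_ifs <;> first | rfl | omega

theorem matAdagOffDiag_mul_self (n : ℕ) (b : ℂ) (j : ℕ) :
    matAdagOffDiag n b j * matAdagOffDiag n b j = b ^ 2 := by
  unfold matAdagOffDiag
  split_ifs <;> ring

/-- For `n ≥ 5`, the matrix `A†` with `a := 2`, `b := i` satisfies
`det A† = (2 + 2i)·P_n`, where `P_n` is the `n`-th Pell number. -/
theorem det_matAdag_pell (n : ℕ) (hn : 5 ≤ n) :
    Matrix.det (matAdag n 2 Complex.I) = (2 + 2 * Complex.I) * (pell n : ℂ) := by
  obtain ⟨t, rfl⟩ : ∃ t, n = t + 3 := ⟨n - 3, by omega⟩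
  rw [matAdag_eq_tridiag, det_tridiag_succ_succ]
  set d := matAdagDiag (t + 3) 2 Complex.I
  set u := matAdagOffDiag (t + 3) Complex.I
  have hul : ∀ j, u j * u j = -1 := fun j => by
    rw [matAdagOffDiag_mul_self, Complex.I_sq]
  have hd : ∀ j, 0 < j → j < t + 2 → d j = 2 := fun j h₀ h₁ => by
    simp only [d, matAdagDiag]
    rw [if_neg (by omega)]
  have hd₀ : d 0 = 2 + Complex.I := by simp [d, matAdagDiag]
  have hdlast : d (t + 1 + 1) = 2 + Complex.I := by simp [d, matAdagDiag]
  have hminor := det_tridiag_eq_pell d u u (t + 2) hd hul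
  rw [hul, hdlast, hminor (t + 1) (by omega), hminor t (by omega), hd₀]
  simp only [pell, Nat.cast_add, Nat.cast_mul, Nat.cast_ofNat]
  linear_combination (2 * (pell (t + 1) : ℂ) + pell t) * Complex.I_sq
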